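/- arXiv:2504.20916 — 4 statements merged into one kernel-verified Lean document; each statement's English description precedes it below -/
import Mathlib

section
/- Let G be a finite group, let N be a normal subgroup of G, and let ℳ₁ be a subset of the set ℳ_G(N) of maximal G-normal subgroups of N. Then ℳ₁ is minimal in itself if and only if |N| / |⋂_{M ∈ ℳ₁} M| = ∏_{M ∈ ℳ₁} (|N|/|M|), where the intersection over the empty set is taken to be N. -/
/-- `M` is a maximal `G`-normal subgroup of `U`: a normal subgroup of `G` properly contained
in `U` such that no normal subgroup of `G` lies strictly between `M` and `U`.
`maxGNormal U` is the set of all such subgroups (denoted `ℳ_G(U)`). -/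
def maxGNormal {G : Type*} [Group G] (U : Subgroup G) : Set (Subgroup G) :=
  {M | M.Normal ∧ M < U ∧ ∀ V : Subgroup G, V.Normal → M < V → ¬V < U}

/-- The set `ℳ_G(U, V)` of maximal `G`-normal subgroups of `U` that contain `V`. -/
def maxGNormalBtw {G : Type*} [Group G] (U V : Subgroup G) : Set (Subgroup G) :=
  {M | M ∈ maxGNormal U ∧ V ≤ M}

/-- The intersection of a collection `E` of subgroups (all intended to lie below `U`),
with the convention that the intersection over the empty collection is `U`. -/
def interIn {G : Type*} [Group G] (U : Subgroup G) (E : Set (Subgroup G)) : Subgroup G :=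
  U ⊓ sInf E

/-- A collection `ℳ` of (maximal `G`-normal) subgroups of `U` is a minimal subset in itself:
no proper subset `E ⊊ ℳ` has the same intersection as `ℳ` (empty intersection taken as `U`). -/
def MinimalInItself {G : Type*} [Group G] (U : Subgroup G) (ℳ : Set (Subgroup G)) : Prop :=
  ∀ E : Set (Subgroup G), E ⊂ ℳ → interIn U E ≠ interIn U ℳ

/-! Relative indices in `N` are submultiplicative, `|N : A ⊓ B| ≤ |N : A| |N : B|`, with
equality when `A ⊔ B = N` and one of them is normal. If `ℳ` is minimal in itself, the
intersection `K` of `ℳ \ {M}` is a normal subgroup of `G` not contained in `M`, so `K ⊔ M = N` by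
maximality of `M` and the indices multiply. Conversely, if some `M ∈ ℳ` is redundant, the index
of the intersection is at most the product over `ℳ \ {M}`, which is smaller than the full product
because `|N : M| > 1`. -/

section

variable {G : Type*} [Group G]

namespace Subgroup

theorem card_div_card_eq_relIndex [Finite G] {H N : Subgroup G} (h : H ≤ N) :
    Nat.card N / Nat.card H = H.relIndex N := by
  rw [← relIndex_bot_left, ← relIndex_bot_left, ← relIndex_mul_relIndex ⊥ H N bot_le h,
    Nat.mul_div_cancel_left _ (relIndex_bot_left H ▸ Nat.card_pos)]

theorem relIndex_pos_of_finite [Finite G] (H K : Subgroup G) : 0 < H.relIndex K :=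
  Nat.pos_of_ne_zero index_ne_zero_of_finite

theorem relIndex_inf_eq_mul_of_sup_eq {K M N : Subgroup G} [M.Normal] (hKN : K ≤ N)
    (h : K ⊔ M = N) : (K ⊓ M).relIndex N = M.relIndex N * K.relIndex N := by
  rw [← relIndex_mul_relIndex _ _ _ inf_le_left hKN]
  congr 1
  rw [inf_comm, inf_relIndex_right, ← h, relIndex_sup_right]

end Subgroup

open Subgroup

theorem sup_eq_of_mem_maxGNormal {N K M : Subgroup G} (hM : M ∈ maxGNormal N) [K.Normal]
    (hKN : K ≤ N) (hKM : ¬K ≤ M) : K ⊔ M = N := by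
  obtain ⟨hMnormal, hMN, hmax⟩ := hM
  by_contra hne
  exact hmax (K ⊔ M) inferInstance (right_lt_sup.2 hKM)
    ((sup_le hKN hMN.le).lt_of_ne hne)

theorem interIn_empty (U : Subgroup G) : interIn U ∅ = U := by
  rw [interIn, sInf_empty, inf_top_eq]

theorem interIn_insert (U M : Subgroup G) (E : Set (Subgroup G)) :
    interIn U (insert M E) = M ⊓ interIn U E := by
  rw [interIn, interIn, sInf_insert, inf_left_comm]

theorem interIn_union (U : Subgroup G) (E F : Set (Subgroup G)) :
    interIn U (E ∪ F) = interIn U E ⊓ interIn U F := by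
  rw [interIn, interIn, interIn, sInf_union, inf_inf_distrib_left]

theorem interIn_anti (U : Subgroup G) {E F : Set (Subgroup G)} (h : E ⊆ F) :
    interIn U F ≤ interIn U E :=
  inf_le_inf_left U (sInf_le_sInf h)

theorem interIn_le (U : Subgroup G) (E : Set (Subgroup G)) : interIn U E ≤ U :=
  inf_le_left

theorem Subgroup.Normal.interIn {U : Subgroup G} (hU : U.Normal) {E : Set (Subgroup G)}
    (hE : ∀ M ∈ E, M.Normal) : (interIn U E).Normal := by
  have : (sInf E).Normal := by
    rw [sInf_eq_iInf']
    exact normal_iInf_normal fun M : E => hE M M.2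
  exact inferInstanceAs (U ⊓ sInf E).Normal

theorem minimalInItself_iff_forall_diff_singleton {U : Subgroup G} {ℳ : Set (Subgroup G)} :
    MinimalInItself U ℳ ↔ ∀ M ∈ ℳ, interIn U (ℳ \ {M}) ≠ interIn U ℳ := by
  refine ⟨fun h M hM => h _ (Set.sdiff_singleton_ssubset.2 hM), fun h E hE hEq => ?_⟩
  obtain ⟨M, hM, hME⟩ := Set.exists_of_ssubset hE
  refine h M hM (le_antisymm ?_ (interIn_anti U Set.sdiff_subset))
  calc interIn U (ℳ \ {M}) ≤ interIn U E :=
        interIn_anti U fun x hx => ⟨hE.subset hx, fun hxM => hME (hxM ▸ hx)⟩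
    _ = interIn U ℳ := hEq

theorem MinimalInItself.subset {U : Subgroup G} {ℳ E : Set (Subgroup G)}
    (h : MinimalInItself U ℳ) (hE : E ⊆ ℳ) : MinimalInItself U E := by
  intro F hF hFE
  obtain ⟨x, hxE, hxF⟩ := Set.exists_of_ssubset hF
  refine h (F ∪ (ℳ \ E)) ?_ ?_
  · refine Set.ssubset_iff_of_subset (Set.union_subset (hF.subset.trans hE) Set.sdiff_subset)
      |>.2 ⟨x, hE hxE, fun hx => hx.elim hxF fun hx' => hx'.2 hxE⟩
  · rw [interIn_union, hFE, ← interIn_union, Set.union_sdiff_cancel hE]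

theorem relIndex_interIn_le_finprod (N : Subgroup G) {E : Set (Subgroup G)} (hE : E.Finite) :
    (interIn N E).relIndex N ≤ ∏ᶠ M ∈ E, M.relIndex N := by
  induction E, hE using Set.Finite.induction_on with
  | empty => rw [interIn_empty, relIndex_self, finprod_mem_empty]
  | @insert M E hME hE ih =>
    rw [interIn_insert, finprod_mem_insert _ hME hE]
    exact relIndex_inf_le.trans (Nat.mul_le_mul_left _ ih)

variable [Finite G]

theorem relIndex_interIn_eq_finprod_of_minimalInItself {N : Subgroup G} (hN : N.Normal)
    {ℳ : Set (Subgroup G)} (hℳ : ℳ ⊆ maxGNormal N) (hmin : MinimalInItself N ℳ) :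
    (interIn N ℳ).relIndex N = ∏ᶠ M ∈ ℳ, M.relIndex N := by
  induction ℳ, ℳ.toFinite using Set.Finite.induction_on with
  | empty => rw [interIn_empty, relIndex_self, finprod_mem_empty]
  | @insert M ℳ hMℳ hℳfin ih =>
    have hℳmax : ℳ ⊆ maxGNormal N := (Set.subset_insert M ℳ).trans hℳ
    have := hN.interIn fun M' hM' => (hℳmax hM').1
    have := (hℳ (Set.mem_insert M ℳ)).1
    have hnot_le : ¬interIn N ℳ ≤ M := fun hle => by
      refine minimalInItself_iff_forall_diff_singleton.1 hmin M (Set.mem_insert M ℳ) ?_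
      rw [Set.insert_sdiff_self_of_notMem hMℳ, interIn_insert, inf_eq_right.2 hle]
    rw [interIn_insert, inf_comm, relIndex_inf_eq_mul_of_sup_eq (interIn_le N ℳ)
      (sup_eq_of_mem_maxGNormal (hℳ (Set.mem_insert M ℳ)) (interIn_le N ℳ) hnot_le),
      finprod_mem_insert _ hMℳ hℳfin, ih hℳmax (hmin.subset (Set.subset_insert M ℳ))]

theorem minimalInItself_of_relIndex_interIn_eq_finprod {N : Subgroup G}
    {ℳ : Set (Subgroup G)} (hℳ : ℳ ⊆ maxGNormal N)
    (heq : (interIn N ℳ).relIndex N = ∏ᶠ M ∈ ℳ, M.relIndex N) : MinimalInItself N ℳ := by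
  refine minimalInItself_iff_forall_diff_singleton.2 fun M hM hdiff => ?_
  have hsplit : ∏ᶠ M' ∈ ℳ, M'.relIndex N = M.relIndex N * ∏ᶠ M' ∈ ℳ \ {M}, M'.relIndex N := by
    rw [← finprod_mem_mul_sdiff (Set.singleton_subset_iff.2 hM) ℳ.toFinite, finprod_mem_singleton]
  have hlt : 1 < M.relIndex N :=
    lt_of_le_of_ne (relIndex_pos_of_finite M N) fun h =>
      (hℳ hM).2.1.not_ge (relIndex_eq_one.1 h.symm)
  have hprod_pos := relIndex_pos_of_finite (interIn N ℳ) N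
  have hle := relIndex_interIn_le_finprod N (ℳ.toFinite.sdiff (t := {M}))
  rw [hdiff, heq, hsplit] at hle
  rw [heq, hsplit] at hprod_pos
  nlinarith

end

/-- Lemma 2.2(i): `ℳ₁ ⊆ ℳ_G(N)` is minimal in itself iff
`|N| / |⋂_{M ∈ ℳ₁} M| = ∏_{M ∈ ℳ₁} |N|/|M|` (empty intersection taken as `N`). -/
theorem stmt_1 {G : Type*} [Group G] [Fintype G] (N : Subgroup G) (hN : N.Normal)
    (ℳ₁ : Set (Subgroup G)) (hℳ₁ : ℳ₁ ⊆ maxGNormal N) :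
    MinimalInItself N ℳ₁ ↔
      Nat.card N / Nat.card (interIn N ℳ₁) = ∏ᶠ M ∈ ℳ₁, Nat.card N / Nat.card M := by
  rw [Subgroup.card_div_card_eq_relIndex (interIn_le N ℳ₁),
    finprod_mem_congr rfl fun M hM => Subgroup.card_div_card_eq_relIndex (hℳ₁ hM).2.1.le]
  exact ⟨relIndex_interIn_eq_finprod_of_minimalInItself hN hℳ₁,
    minimalInItself_of_relIndex_interIn_eq_finprod hℳ₁⟩
end

section
/- Let G be a finite group and let N, K be normal subgroups of G with K properly contained in N. If ⋂_{M ∈ ℳ_G(N)} M ⊆ K, then K can be expressed as an intersection of some maximal G-normal subgroups of N; moreover K = ⋂_{M ∈ ℳ_G(N,K)} M. -/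
/-!
The normal subgroups of `G` form a finite modular lattice, and the claim holds in any modular
lattice with `WellFoundedLT`: if the radical of `n` (the meet of its coatoms) lies below `k ≤ n`,
and `x ≥ k` lies below every coatom of `n` containing `k`, then `x ≤ k`. Induct on `n`. If every
coatom of `n` contains `k`, this is the hypothesis on the radical. Otherwise some coatom `m` has
`k ⊔ m = n`. The radical of `m` lies below `k ⊓ m`, and every coatom `c` of `m` above `k ⊓ m`
lifts to the coatom `c ⊔ k` of `n` with `(c ⊔ k) ⊓ m = c`, so induction gives `x ⊓ m ≤ k ⊓ m`;
modularity then yields `x = k ⊔ (x ⊓ m) ≤ k`.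
-/

section Lattice

variable {α : Type*} [Lattice α]

theorem CovBy.sup_eq_of_not_le {m n k : α} (hmn : m ⋖ n) (hkn : k ≤ n) (hkm : ¬k ≤ m) :
    k ⊔ m = n :=
  (hmn.eq_or_eq le_sup_right (sup_le hkn hmn.le)).resolve_left fun h => hkm (h ▸ le_sup_left)

variable [IsModularLattice α]

theorem CovBy.inf_covBy_of_covBy_of_ne {c m n : α} (hcn : c ⋖ n) (hmn : m ⋖ n) (hcm : c ≠ m) :
    c ⊓ m ⋖ m := by
  have hcm_sup : c ⊔ m = n :=
    hmn.sup_eq_of_not_le hcn.le fun h =>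
      hcm ((hcn.eq_or_eq h hmn.le).resolve_right hmn.ne).symm
  exact inf_covBy_of_covBy_sup_left (hcm_sup ▸ hcn)

theorem CovBy.sup_covBy_of_covBy {c m n k : α} (hcm : c ⋖ m) (hmn : m ⋖ n) (hkn : k ≤ n)
    (hkm : ¬k ≤ m) (hkc : k ⊓ m ≤ c) : c ⊔ k ⋖ n ∧ (c ⊔ k) ⊓ m = c := by
  have hinf : (c ⊔ k) ⊓ m = c := by
    rw [sup_inf_assoc_of_le k hcm.le, sup_eq_left.mpr hkc]
  have hsup : m ⊔ (c ⊔ k) = n := by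
    rw [← sup_assoc, sup_eq_left.mpr hcm.le, sup_comm, hmn.sup_eq_of_not_le hkn hkm]
  refine ⟨hsup ▸ covBy_sup_of_inf_covBy_left ?_, hinf⟩
  rwa [inf_comm, hinf]

/-- The radical of `n` lies below `k`, stated without infinite meets. -/
def RadicalLE (n k : α) : Prop :=
  ∀ y ≤ n, (∀ m, m ⋖ n → y ≤ m) → y ≤ k

theorem RadicalLE.inf_of_covBy {m n k : α} (hk : RadicalLE n k) (hmn : m ⋖ n) :
    RadicalLE m (k ⊓ m) := by
  intro y hym hy
  refine le_inf (hk y (hym.trans hmn.le) fun c hcn => ?_) hym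
  by_cases hcm : c = m
  · exact hcm ▸ hym
  · exact (hy _ (hcn.inf_covBy_of_covBy_of_ne hmn hcm)).trans inf_le_left

theorem RadicalLE.le_of_forall_covBy [WellFoundedLT α] {n k x : α} (hk : RadicalLE n k)
    (hkx : k ≤ x) (hxn : x ≤ n) (hx : ∀ m, m ⋖ n → k ≤ m → x ≤ m) : x ≤ k := by
  induction n using WellFoundedLT.induction generalizing k x with
  | ind n IH =>
  by_cases hsep : ∃ m, m ⋖ n ∧ ¬k ≤ m
  · obtain ⟨m, hmn, hkm⟩ := hsep
    have hxm : x ⊓ m ≤ k ⊓ m := by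
      refine IH m hmn.lt (hk.inf_of_covBy hmn) (inf_le_inf_right m hkx) inf_le_right
        fun c hcm hkc => ?_
      obtain ⟨hckn, hinf⟩ := hcm.sup_covBy_of_covBy hmn (hkx.trans hxn) hkm hkc
      exact hinf ▸ inf_le_inf_right m (hx _ hckn le_sup_right)
    calc x = (k ⊔ m) ⊓ x := by
          rw [hmn.sup_eq_of_not_le (hkx.trans hxn) hkm, inf_eq_right.mpr hxn]
      _ = k ⊔ x ⊓ m := by rw [sup_inf_assoc_of_le m hkx, inf_comm]
      _ ≤ k := sup_le le_rfl (hxm.trans inf_le_left)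
  · push Not at hsep
    exact hk x hxn fun m hmn => hx m hmn (hsep m hmn)

end Lattice

namespace Subgroup

variable (G : Type*) [Group G]

def normalSublattice : Sublattice (Subgroup G) where
  carrier := {H | H.Normal}
  supClosed' H hH K hK := @sup_normal G _ H K hH hK
  infClosed' H hH K hK := @normal_inf_normal G _ H K hH hK

variable {G}

theorem sup_inf_assoc_of_le_of_normal {x : Subgroup G} (y : Subgroup G) {z : Subgroup G}
    [y.Normal] [z.Normal] (h : x ≤ z) : (x ⊔ y) ⊓ z = x ⊔ y ⊓ z := by
  apply SetLike.coe_injective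
  rw [coe_inf, mul_normal, mul_normal, mul_inf_assoc x y z h]

instance : IsModularLattice (normalSublattice G) where
  sup_inf_le_assoc_of_le {x} y {z} h := by
    have : (y : Subgroup G).Normal := y.2
    have : (z : Subgroup G).Normal := z.2
    exact (sup_inf_assoc_of_le_of_normal (y : Subgroup G) (Subtype.coe_le_coe.mpr h)).le

theorem mem_maxGNormal_iff_covBy {M N : normalSublattice G} :
    (M : Subgroup G) ∈ maxGNormal N ↔ M ⋖ N := by
  refine ⟨fun ⟨_, hlt, hmax⟩ => ⟨hlt, fun V hMV hVN => hmax V V.2 hMV hVN⟩,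
    fun h => ⟨M.2, h.lt, fun V hV hMV hVN => h.2 (c := ⟨V, hV⟩) hMV hVN⟩⟩

theorem normal_interIn {N : Subgroup G} {E : Set (Subgroup G)} (hN : N.Normal)
    (hE : ∀ M ∈ E, M.Normal) : (interIn N E).Normal := by
  have := hN
  have : (sInf E).Normal := by
    rw [sInf_eq_iInf']
    exact normal_iInf_normal fun M => hE M M.2
  exact normal_inf_normal N (sInf E)

end Subgroup

/-- Lemma 2.3: if `K ⊊ N` are normal subgroups of `G` with `⋂_{M ∈ ℳ_G(N)} M ⊆ K`, then `K`
can be expressed as an intersection of some maximal `G`-normal subgroups of `N`; moreover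
`K = ⋂_{M ∈ ℳ_G(N,K)} M`. -/
theorem stmt_3 {G : Type*} [Group G] [Fintype G] (N K : Subgroup G)
    (hN : N.Normal) (hK : K.Normal) (hlt : K < N)
    (h : interIn N (maxGNormal N) ≤ K) :
    (∃ E : Set (Subgroup G), E ⊆ maxGNormal N ∧ E.Nonempty ∧ interIn N E = K) ∧
      K = interIn N (maxGNormalBtw N K) := by
  have hKT : K ≤ interIn N (maxGNormalBtw N K) := le_inf hlt.le (le_sInf fun M hM => hM.2)
  have hTK : interIn N (maxGNormalBtw N K) ≤ K := by
    let n : Subgroup.normalSublattice G := ⟨N, hN⟩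
    let k : Subgroup.normalSublattice G := ⟨K, hK⟩
    have hrad : RadicalLE n k := fun y hyn hy =>
      le_trans (b := interIn N (maxGNormal N)) (le_inf hyn (le_sInf fun M hM =>
        hy ⟨M, hM.1⟩ (Subgroup.mem_maxGNormal_iff_covBy.mp hM))) h
    refine hrad.le_of_forall_covBy
      (x := ⟨_, Subgroup.normal_interIn hN fun M hM => hM.1.1⟩) hKT
      (inf_le_left : interIn N _ ≤ N) fun m hmn hkm => ?_
    exact inf_le_right.trans (sInf_le (show (m : Subgroup G) ∈ maxGNormalBtw N K from
      ⟨Subgroup.mem_maxGNormal_iff_covBy.mpr hmn, hkm⟩))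
  have hKeq : K = interIn N (maxGNormalBtw N K) := le_antisymm hKT hTK
  refine ⟨⟨maxGNormalBtw N K, fun M hM => hM.1, ?_, hKeq.symm⟩, hKeq⟩
  refine Set.nonempty_iff_ne_empty.mpr fun hE => hlt.ne ?_
  rw [hKeq, hE, interIn, sInf_empty, inf_top_eq]
end

section
/- Let G be a finite group and let x ∈ G. Then |[x^G]| = ∑_{V normal in G, V ⊆ ⟨x^G⟩} |V| · μ_G(V, ⟨x^G⟩). -/
/-- The group-theoretic Möbius function `μ_G(V, U)`:
`∑_{E ⊆ ℳ_G(U,V), ⋂_{M ∈ E} M = V} (-1)^{|E|}`, empty intersection taken as `U`. -/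
noncomputable def muG {G : Type*} [Group G] (V U : Subgroup G) : ℤ :=
  ∑ᶠ E ∈ {E : Set (Subgroup G) | E ⊆ maxGNormalBtw U V ∧ interIn U E = V}, (-1 : ℤ) ^ E.ncard

/-!
An element `y` has `⟨y^G⟩ = N := ⟨x^G⟩` exactly when `y ∈ N` and `y` lies in no maximal
`G`-normal subgroup of `N`: in a finite group every proper `G`-normal subgroup of `N` lies in a
maximal one. Inclusion–exclusion over the finite set `ℳ` of these maximal subgroups gives
`|[x^G]| = ∑_{E ⊆ ℳ} (-1)^|E| |N ∩ ⋂ E|`, and grouping the `E` by `V = N ∩ ⋂ E` yields the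
Möbius sum, because every member of `E` contains `N ∩ ⋂ E`, so that `E ⊆ ℳ_G(N, V)` holds
automatically.
-/

open Finset

theorem Finset.finsum_mem_subset_and_eq_sum_filter_powerset {α M : Type*} [AddCommMonoid M]
    (s : Finset α) (p : Set α → Prop) [DecidablePred fun t : Finset α ↦ p t] (f : Set α → M) :
    ∑ᶠ E ∈ {E | E ⊆ ↑s ∧ p E}, f E =
      ∑ t ∈ s.powerset with p (t : Finset α), f (t : Finset α) := by
  have himage : {E | E ⊆ ↑s ∧ p E} =
      (↑) '' (↑(s.powerset.filter fun t : Finset α ↦ p t) : Set (Finset α)) := by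
    ext E
    constructor
    · rintro ⟨hE, hp⟩
      have hfin := s.finite_toSet.subset hE
      refine ⟨hfin.toFinset, ?_, hfin.coe_toFinset⟩
      rw [mem_coe, mem_filter, mem_powerset, ← coe_subset, hfin.coe_toFinset]
      exact ⟨hE, hp⟩
    · rintro ⟨t, ht, rfl⟩
      simpa using ht
  rw [himage, finsum_mem_image Finset.coe_injective.injOn, finsum_mem_coe_finset]

namespace Subgroup

variable {G : Type*} [Group G]

theorem mem_maxGNormal_iff_maximal {N M : Subgroup G} :
    M ∈ maxGNormal N ↔ Maximal (fun W : Subgroup G ↦ W.Normal ∧ W < N) M := by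
  refine ⟨fun ⟨hM, hMN, hmax⟩ ↦ ⟨⟨hM, hMN⟩, fun W ⟨hW, hWN⟩ hMW ↦ ?_⟩,
    fun h ↦ ⟨h.prop.1, h.prop.2, fun W hW hMW hWN ↦ hMW.not_ge (h.le_of_ge ⟨hW, hWN⟩ hMW.le)⟩⟩
  by_contra hWM
  exact hmax W hW (lt_of_le_not_ge hMW hWM) hWN

theorem exists_maxGNormal_ge [Finite (Subgroup G)] {N V : Subgroup G} (hV : V.Normal)
    (hVN : V < N) : ∃ M ∈ maxGNormal N, V ≤ M := by
  obtain ⟨M, hVM, hM⟩ := Set.toFinite {W : Subgroup G | W.Normal ∧ W < N} |>.exists_le_maximal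
    (a := V) ⟨hV, hVN⟩
  exact ⟨M, mem_maxGNormal_iff_maximal.2 hM, hVM⟩

theorem normalClosure_singleton_eq_iff [Finite (Subgroup G)] {N : Subgroup G} [N.Normal]
    {y : G} :
    normalClosure {y} = N ↔ y ∈ N ∧ ∀ M ∈ maxGNormal N, y ∉ M := by
  have hle {M : Subgroup G} [M.Normal] : normalClosure {y} ≤ M ↔ y ∈ M := by
    rw [← normalClosure_subset_iff, Set.singleton_subset_iff, SetLike.mem_coe]
  constructor
  · rintro rfl
    refine ⟨subset_normalClosure rfl, fun M ⟨hM, hMN, _⟩ hyM ↦ ?_⟩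
    exact (hle.2 hyM).not_gt hMN
  · rintro ⟨hyN, hy⟩
    refine (hle.2 hyN).eq_of_not_lt fun hlt ↦ ?_
    obtain ⟨M, hM, hyM⟩ := exists_maxGNormal_ge normalClosure_normal hlt
    have : M.Normal := hM.1
    exact hy M hM (hle.1 hyM)

theorem normal_sInf {E : Set (Subgroup G)} (hE : ∀ M ∈ E, M.Normal) : (sInf E).Normal :=
  ⟨fun n hn g ↦ mem_sInf.2 fun M hM ↦ (hE M hM).conj_mem n (mem_sInf.1 hn M hM) g⟩

theorem interIn_normal {U : Subgroup G} [U.Normal] {E : Set (Subgroup G)}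
    (hE : ∀ M ∈ E, M.Normal) : (interIn U E).Normal :=
  have := normal_sInf hE
  normal_inf_normal U (sInf E)

theorem le_of_interIn_eq {U V : Subgroup G} {E : Set (Subgroup G)} (h : interIn U E = V)
    {M : Subgroup G} (hM : M ∈ E) : V ≤ M :=
  h ▸ inf_le_right.trans (sInf_le hM)

theorem muG_eq_sum_filter_powerset {U V : Subgroup G} {s : Finset (Subgroup G)}
    (hs : ↑s = maxGNormal U) [DecidablePred fun t : Finset (Subgroup G) ↦ interIn U ↑t = V] :
    muG V U = ∑ t ∈ s.powerset with interIn U (t : Finset (Subgroup G)) = V, (-1) ^ #t := by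
  have hsets :
      {E | E ⊆ maxGNormalBtw U V ∧ interIn U E = V} = {E | E ⊆ ↑s ∧ interIn U E = V} := by
    ext E
    simp only [Set.mem_ofPred_eq, hs, maxGNormalBtw]
    exact ⟨fun ⟨hE, h⟩ ↦ ⟨fun M hM ↦ (hE hM).1, h⟩,
      fun ⟨hE, h⟩ ↦ ⟨fun M hM ↦ ⟨hE hM, le_of_interIn_eq h hM⟩, h⟩⟩
  rw [muG, hsets, finsum_mem_subset_and_eq_sum_filter_powerset]
  exact sum_congr rfl fun t _ ↦ by rw [Set.ncard_coe_finset]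

theorem finsum_mul_muG_eq_sum_powerset [Finite (Subgroup G)] {N : Subgroup G} [N.Normal]
    {s : Finset (Subgroup G)} (hs : ↑s = maxGNormal N) (f : Subgroup G → ℤ) :
    ∑ᶠ V ∈ {V : Subgroup G | V.Normal ∧ V ≤ N}, f V * muG V N =
      ∑ t ∈ s.powerset, (-1) ^ #t * f (interIn N ↑t) := by
  classical
  have hmaps : ∀ t ∈ s.powerset,
      interIn N ↑t ∈ (Set.toFinite {V : Subgroup G | V.Normal ∧ V ≤ N}).toFinset := by
    intro t ht
    rw [Set.Finite.mem_toFinset]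
    refine ⟨interIn_normal fun M hM ↦ ?_, inf_le_left⟩
    exact (hs ▸ mem_powerset.1 ht hM : M ∈ maxGNormal N).1
  rw [finsum_mem_eq_finite_toFinset_sum _ (Set.toFinite _), ← sum_fiberwise_of_maps_to hmaps]
  refine sum_congr rfl fun V _ ↦ ?_
  rw [muG_eq_sum_filter_powerset hs, mul_sum]
  refine sum_congr rfl fun t ht ↦ ?_
  rw [(mem_filter.1 ht).2, mul_comm]

theorem ncard_mem_forall_notMem_eq_sum_powerset [Fintype G] (N : Subgroup G)
    (s : Finset (Subgroup G)) :
    ({y | y ∈ N ∧ ∀ M ∈ s, y ∉ M}.ncard : ℤ) =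
      ∑ t ∈ s.powerset, (-1 : ℤ) ^ #t * Nat.card (interIn N ↑t) := by
  classical
  have hlhs : {y | y ∈ N ∧ ∀ M ∈ s, y ∉ M}.ncard =
      #{y ∈ s.inf fun M ↦ (M : Set G).toFinsetᶜ | y ∈ N} := by
    rw [Set.ncard_eq_toFinset_card']
    congr 1
    ext y
    simp [Finset.mem_inf, and_comm]
  have hcard (t : Finset (Subgroup G)) :
      Nat.card (interIn N ↑t) = #{y ∈ t.inf fun M ↦ (M : Set G).toFinset | y ∈ N} := by
    rw [Nat.card_eq_fintype_card, Fintype.card_subtype]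
    congr 1
    ext y
    simp [interIn, Finset.mem_inf, and_comm]
  have := inclusion_exclusion_sum_inf_compl s (fun M ↦ (M : Set G).toFinset)
    (fun y ↦ if y ∈ N then (1 : ℤ) else 0)
  simp only [sum_boole, smul_eq_mul] at this
  simp only [hlhs, hcard, this]

end Subgroup

/-- Lemma 3.4: `|[x^G]| = ∑_{V normal in G, V ⊆ ⟨x^G⟩} |V| · μ_G(V, ⟨x^G⟩)`, where
`[x^G] = {y : ⟨y^G⟩ = ⟨x^G⟩}` and `⟨x^G⟩` is the normal closure of `x`. -/
theorem stmt_7 {G : Type*} [Group G] [Fintype G] (x : G) :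
    (({y : G | Subgroup.normalClosure {y} = Subgroup.normalClosure {x}}).ncard : ℤ) =
      ∑ᶠ V ∈ {V : Subgroup G | V.Normal ∧ V ≤ Subgroup.normalClosure {x}},
        (Nat.card V : ℤ) * muG V (Subgroup.normalClosure {x}) := by
  set N := Subgroup.normalClosure ({x} : Set G)
  obtain ⟨s, hs⟩ := (Set.toFinite (maxGNormal N)).exists_finset_coe
  have hclass : {y : G | Subgroup.normalClosure {y} = N} = {y | y ∈ N ∧ ∀ M ∈ s, y ∉ M} := by
    ext y
    simp only [Set.mem_ofPred_eq, Subgroup.normalClosure_singleton_eq_iff, ← hs, mem_coe]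
  rw [hclass, Subgroup.ncard_mem_forall_notMem_eq_sum_powerset,
    Subgroup.finsum_mul_muG_eq_sum_powerset hs]
end

section
/- Let G be a finite group and let S ⊆ G be a subset closed under inverses and closed under conjugation (i.e., a union of conjugacy classes). Let χ be the character of a finite-dimensional irreducible complex representation of G. Then λ_χ := (1/χ(1)) ∑_{s ∈ S} χ(s) is an eigenvalue of the adjacency matrix A of the Cayley graph Cay(G,S), where A is the G×G matrix over ℂ with A(a,b) = 1 if b·a⁻¹ ∈ S and A(a,b) = 0 otherwise. -/
/-!
Since `S` is a union of conjugacy classes, `T = ∑_{s ∈ S} ρ(s)` commutes with every `ρ(g)`, so by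
Schur's lemma `T = μ • 1`; taking traces gives `μ = λ_χ`. The character itself is then an
eigenvector of the adjacency matrix: `(A χ)(a) = ∑_{s ∈ S} χ(s a) = tr (T ρ(a)) = μ χ(a)`.
-/

/-- The character of a finite-dimensional complex representation `ρ` of `G`:
`χ(g) = Tr(ρ(g))`. -/
noncomputable def repChar {G W : Type*} [Group G] [AddCommGroup W] [Module ℂ W]
    (ρ : Representation ℂ G W) (g : G) : ℂ :=
  LinearMap.trace ℂ W (ρ g)

noncomputable def cayleyMatrix (R : Type*) [Zero R] [One R] {G : Type*} [Group G] (S : Set G) :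
    Matrix G G R :=
  Matrix.of fun a b => S.indicator (fun _ => 1) (b * a⁻¹)

theorem cayleyMatrix_mulVec_apply {R G : Type*} [NonAssocSemiring R] [Group G] [Fintype G]
    (S : Finset G) (v : G → R) (a : G) :
    (cayleyMatrix R (S : Set G)).mulVec v a = ∑ s ∈ S, v (s * a) := by
  classical
  calc (cayleyMatrix R (S : Set G)).mulVec v a
      = ∑ b : G, (S : Set G).indicator (fun _ => (1 : R)) (b * a⁻¹) * v b := rfl
    _ = ∑ s : G, (S : Set G).indicator (fun _ => (1 : R)) s * v (s * a) :=
        Fintype.sum_equiv (Equiv.mulRight a⁻¹) _ _ fun b => by simp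
    _ = ∑ s ∈ S, v (s * a) := by
        simp only [Set.indicator_apply, Finset.mem_coe, ite_mul, one_mul, zero_mul]
        rw [Finset.sum_ite_mem, Finset.univ_inter]

/-- Schur's lemma. -/
theorem Representation.exists_eq_smul_one_of_forall_commute {K G W : Type*} [Field K]
    [IsAlgClosed K] [Monoid G] [AddCommGroup W] [Module K W] [FiniteDimensional K W]
    [Nontrivial W] {ρ : Representation K G W}
    (hirr : ∀ U : Submodule K W, (∀ g : G, ∀ w ∈ U, ρ g w ∈ U) → U = ⊥ ∨ U = ⊤)
    {T : Module.End K W} (hT : ∀ g, Commute T (ρ g)) : ∃ μ : K, T = μ • 1 := by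
  obtain ⟨μ, hμ⟩ := Module.End.exists_eigenvalue T
  have hinvariant : ∀ g : G, ∀ w ∈ T.eigenspace μ, ρ g w ∈ T.eigenspace μ := by
    intro g w hw
    rw [Module.End.mem_eigenspace_iff] at hw ⊢
    rw [← Module.End.mul_apply, (hT g).eq, Module.End.mul_apply, hw, map_smul]
  have htop : T.eigenspace μ = ⊤ := (hirr _ hinvariant).resolve_left hμ
  refine ⟨μ, LinearMap.ext fun w => ?_⟩
  simpa using Module.End.mem_eigenspace_iff.mp (htop ▸ Submodule.mem_top : w ∈ T.eigenspace μ)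

theorem Representation.commute_sum_of_conj_mem {K G W : Type*} [CommSemiring K] [Group G]
    [AddCommMonoid W] [Module K W] (ρ : Representation K G W) {S : Finset G}
    (hconj : ∀ g : G, ∀ s ∈ S, g * s * g⁻¹ ∈ S) (g : G) :
    Commute (∑ s ∈ S, ρ s) (ρ g) := by
  rw [Commute, SemiconjBy, Finset.sum_mul, Finset.mul_sum]
  refine Finset.sum_nbij' (fun s => g⁻¹ * s * g) (fun s => g * s * g⁻¹)
    (fun s hs => by simpa using hconj g⁻¹ s hs) (fun s hs => hconj g s hs)
    (fun s _ => by group) (fun s _ => by group) fun s _ => ?_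
  rw [← map_mul, ← map_mul]
  congr 1
  group

theorem repChar_one {G W : Type*} [Group G] [AddCommGroup W] [Module ℂ W]
    [FiniteDimensional ℂ W] (ρ : Representation ℂ G W) : repChar ρ 1 = Module.finrank ℂ W := by
  simp only [repChar, map_one, LinearMap.trace_one]

theorem repChar_one_ne_zero {G W : Type*} [Group G] [AddCommGroup W] [Module ℂ W]
    [FiniteDimensional ℂ W] [Nontrivial W] (ρ : Representation ℂ G W) : repChar ρ 1 ≠ 0 := by
  rw [repChar_one]
  exact_mod_cast Module.finrank_pos.ne'

theorem sum_repChar_mul_of_sum_eq_smul_one {G W : Type*} [Group G] [AddCommGroup W]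
    [Module ℂ W] {ρ : Representation ℂ G W} {S : Finset G} {μ : ℂ}
    (hμ : ∑ s ∈ S, ρ s = μ • 1) (a : G) :
    ∑ s ∈ S, repChar ρ (s * a) = μ * repChar ρ a :=
  calc ∑ s ∈ S, repChar ρ (s * a)
      = LinearMap.trace ℂ W ((∑ s ∈ S, ρ s) * ρ a) := by
        simp only [repChar, map_mul, Finset.sum_mul, map_sum]
    _ = μ * repChar ρ a := by rw [hμ, smul_one_mul, map_smul, smul_eq_mul, repChar]

theorem stmt_17_general {G : Type*} [Group G] [Fintype G] {W : Type*} [AddCommGroup W] [Module ℂ W]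
    [FiniteDimensional ℂ W] [Nontrivial W]
    (ρ : Representation ℂ G W)
    (hirr : ∀ U : Submodule ℂ W, (∀ g : G, ∀ w ∈ U, ρ g w ∈ U) → U = ⊥ ∨ U = ⊤)
    (S : Set G) (hconj : ∀ g : G, ∀ s ∈ S, g * s * g⁻¹ ∈ S) :
    ∃ v : G → ℂ, v ≠ 0 ∧
      (Matrix.of fun a b : G => S.indicator (fun _ => (1 : ℂ)) (b * a⁻¹)).mulVec v =
        (1 / repChar ρ 1 * ∑ᶠ s ∈ S, repChar ρ s) • v := by
  obtain ⟨S, rfl⟩ := S.toFinite.exists_finset_coe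
  obtain ⟨μ, hμ⟩ := Representation.exists_eq_smul_one_of_forall_commute hirr
    (ρ.commute_sum_of_conj_mem hconj)
  have hχ := sum_repChar_mul_of_sum_eq_smul_one hμ
  have hlam : 1 / repChar ρ 1 * ∑ᶠ s ∈ (S : Set G), repChar ρ s = μ := by
    have h1 := hχ 1
    simp only [mul_one] at h1
    rw [finsum_mem_coe_finset, h1]
    field_simp [repChar_one_ne_zero ρ]
  refine ⟨repChar ρ, fun h => repChar_one_ne_zero ρ (congrFun h 1), funext fun a => ?_⟩
  rw [hlam, Pi.smul_apply, smul_eq_mul, ← hχ a]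
  exact cayleyMatrix_mulVec_apply S _ a

/-- Babai's theorem (Theorem 1.1): for a finite group `G`, a subset `S ⊆ G` closed under
inverses and conjugation, and the character `χ` of a finite-dimensional irreducible complex
representation `ρ` of `G`, the number `λ_χ = (1/χ(1)) ∑_{s ∈ S} χ(s)` is an eigenvalue of the
adjacency matrix `A` of the Cayley graph `Cay(G, S)`, where `A(a,b) = 1` if `b·a⁻¹ ∈ S` and
`A(a,b) = 0` otherwise. -/
theorem stmt_17 {G : Type*} [Group G] [Fintype G] {W : Type*} [AddCommGroup W] [Module ℂ W]
    [FiniteDimensional ℂ W] [Nontrivial W]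
    (ρ : Representation ℂ G W)
    (hirr : ∀ U : Submodule ℂ W, (∀ g : G, ∀ w ∈ U, ρ g w ∈ U) → U = ⊥ ∨ U = ⊤)
    (S : Set G) (hinv : ∀ s ∈ S, s⁻¹ ∈ S) (hconj : ∀ g : G, ∀ s ∈ S, g * s * g⁻¹ ∈ S) :
    ∃ v : G → ℂ, v ≠ 0 ∧
      (Matrix.of fun a b : G => S.indicator (fun _ => (1 : ℂ)) (b * a⁻¹)).mulVec v =
        (1 / repChar ρ 1 * ∑ᶠ s ∈ S, repChar ρ s) • v :=
  stmt_17_general ρ hirr S hconj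
end
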